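/- Fix integers n ≥ 0, m ≥ 1, let U₀ ⊆ ℝ^{n+1} be open and let F^μ_i, Π_i : U₀ × ℝ^m × ℝ^{m×(n+1)} → ℝ (0 ≤ μ ≤ n, 1 ≤ i ≤ m) be smooth. Let ξ = (ξ^1, …, ξ^m) : U₀ × ℝ^m → ℝ^m be smooth and C-admissible, i.e. Σ_{μ=0}^{n} Σ_{i=1}^{m} F^μ_i(x,y,z) · ( ∂_{x^μ} ξ^i(x,y) + Σ_{j=1}^{m} z^j_μ ∂_{y^j} ξ^i(x,y) ) = 0 for all (x,y,z) ∈ U₀ × ℝ^m × ℝ^{m×(n+1)}. Then every smooth map s : U → ℝ^m (U ⊆ U₀ open) which solves the balance system Σ_{μ} ∂_{x^μ} [ F^μ_i(x, s(x), Ds(x)) ] = Π_i(x, s(x), Ds(x)) for all i and all x ∈ U also satisfies the secondary balance law Σ_{μ} ∂_{x^μ} [ Σ_i ξ^i(x, s(x)) F^μ_i(x, s(x), Ds(x)) ] = Σ_i ξ^i(x, s(x)) Π_i(x, s(x), Ds(x)) on U. -/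

import Mathlib

/-! Along a section `s`, the chain rule turns `∂_μ (ξ^i ∘ (id, s))` into the total derivative
`d_μ ξ^i` evaluated at `j¹s`. Hence the Leibniz rule gives
`Σ_μ ∂_μ (ξ^i F^μ_i ∘ j¹s) = FDiv(ξ) ∘ j¹s + Σ_i ξ^i Σ_μ ∂_μ (F^μ_i ∘ j¹s)`, where the first term
vanishes by admissibility and the second equals `Σ_i ξ^i Π_i ∘ j¹s` on solutions. -/

/-- The first jet (matrix of first partial derivatives) of a section
`s : ℝ^{n+1} → ℝ^m` at a point `x`. -/
noncomputable def jet1 (n m : ℕ) (s : (Fin (n + 1) → ℝ) → Fin m → ℝ)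
    (x : Fin (n + 1) → ℝ) : Fin m → Fin (n + 1) → ℝ :=
  fun i ν => fderiv ℝ (fun t => s t i) x (Pi.single ν 1)

open Finset

section
variable {E : Type*} [NormedAddCommGroup E] [NormedSpace ℝ E]

theorem ContinuousLinearMap.map_prod_pi_eq_add_sum {κ : Type*} [Fintype κ] [DecidableEq κ]
    (L : E × (κ → ℝ) →L[ℝ] ℝ) (v : E) (w : κ → ℝ) :
    L (v, w) = L (v, 0) + ∑ j, w j * L (0, Pi.single j 1) := by
  have hvw : ((v, w) : E × (κ → ℝ))
      = (v, 0) + ∑ j, w j • ((0 : E), (Pi.single j 1 : κ → ℝ)) := by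
    ext k
    · simp [Prod.fst_sum]
    · simp [Prod.snd_sum, Finset.sum_apply, Pi.single_apply]
  rw [hvw, map_add, map_sum]
  simp only [map_smul, smul_eq_mul]

theorem fderiv_sum_mul_apply {ι : Type*} (u : Finset ι) {f g : ι → E → ℝ} {x : E}
    (hf : ∀ i, DifferentiableAt ℝ (f i) x) (hg : ∀ i, DifferentiableAt ℝ (g i) x) (v : E) :
    fderiv ℝ (fun t => ∑ i ∈ u, f i t * g i t) x v
      = ∑ i ∈ u, (g i x * fderiv ℝ (f i) x v + f i x * fderiv ℝ (g i) x v) := by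
  rw [fderiv_fun_sum (A := fun i t => f i t * g i t) fun i _ => (hf i).mul (hg i),
    _root_.sum_apply]
  refine sum_congr rfl fun i _ => ?_
  rw [fderiv_fun_mul (hf i) (hg i)]
  simp only [add_apply, smul_apply, smul_eq_mul]
  ring

end

/-- The total derivative `d_μ f` of the paper, evaluated at the point `(x, y, z)` of the jet space. -/
noncomputable def totalDeriv {ι κ : Type*} [Fintype κ] [DecidableEq ι] [DecidableEq κ]
    (f : (ι → ℝ) × (κ → ℝ) → ℝ) (μ : ι) (x : ι → ℝ) (y : κ → ℝ) (z : κ → ι → ℝ) : ℝ :=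
  fderiv ℝ f (x, y) (Pi.single μ 1, 0) + ∑ j, z j μ * fderiv ℝ f (x, y) (0, Pi.single j 1)

theorem fderiv_comp_graph_apply_single {ι κ : Type*} [Fintype ι] [Fintype κ] [DecidableEq ι]
    [DecidableEq κ] {f : (ι → ℝ) × (κ → ℝ) → ℝ} {s : (ι → ℝ) → κ → ℝ} {x : ι → ℝ}
    (hf : DifferentiableAt ℝ f (x, s x)) (hs : DifferentiableAt ℝ s x) (μ : ι) :
    fderiv ℝ (fun t => f (t, s t)) x (Pi.single μ 1)
      = totalDeriv f μ x (s x) fun j ν => fderiv ℝ s x (Pi.single ν 1) j := by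
  have hgraph : HasFDerivAt (fun t => (t, s t))
      ((ContinuousLinearMap.id ℝ _).prod (fderiv ℝ s x)) x :=
    (hasFDerivAt_id x).prodMk hs.hasFDerivAt
  have hcomp : HasFDerivAt (fun t => f (t, s t))
      ((fderiv ℝ f (x, s x)).comp ((ContinuousLinearMap.id ℝ _).prod (fderiv ℝ s x))) x :=
    hf.hasFDerivAt.comp x hgraph
  rw [hcomp.fderiv]
  exact (fderiv ℝ f (x, s x)).map_prod_pi_eq_add_sum _ _

theorem jet1_eq_fderiv_apply {n m : ℕ} {s : (Fin (n + 1) → ℝ) → Fin m → ℝ}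
    {x : Fin (n + 1) → ℝ} (hs : DifferentiableAt ℝ s x) :
    jet1 n m s x = fun j ν => fderiv ℝ s x (Pi.single ν 1) j := by
  ext j ν
  simp [jet1, fderiv_apply hs]

theorem contDiffOn_jet1 {n m : ℕ} {s : (Fin (n + 1) → ℝ) → Fin m → ℝ}
    {U : Set (Fin (n + 1) → ℝ)} {k : WithTop ℕ∞} (hs : ContDiffOn ℝ (k + 1) s U) (hU : IsOpen U) :
    ContDiffOn ℝ k (jet1 n m s) U :=
  contDiffOn_pi' fun j => contDiffOn_pi' fun _ =>
    ((contDiffOn_pi.1 hs j).fderiv_of_isOpen hU le_rfl).clm_apply contDiffOn_const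

theorem ContDiffOn.differentiableAt_comp_jet1 {n m : ℕ} {G' : Type*} [NormedAddCommGroup G']
    [NormedSpace ℝ G'] {G : (Fin (n + 1) → ℝ) × (Fin m → ℝ) × (Fin m → Fin (n + 1) → ℝ) → G'}
    {U₀ U : Set (Fin (n + 1) → ℝ)} {s : (Fin (n + 1) → ℝ) → Fin m → ℝ} {x : Fin (n + 1) → ℝ}
    (hG : ContDiffOn ℝ 1 G (U₀ ×ˢ Set.univ)) (hs : ContDiffOn ℝ 2 s U) (hU : IsOpen U)
    (hUsub : U ⊆ U₀) (hx : x ∈ U) :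
    DifferentiableAt ℝ (fun t => G (t, s t, jet1 n m s t)) x := by
  have hjet : ContDiffOn ℝ 1 (fun t => (t, s t, jet1 n m s t)) U :=
    contDiffOn_id.prodMk ((hs.of_le (by norm_num)).prodMk (contDiffOn_jet1 (k := 1) hs hU))
  exact ((hG.comp hjet fun t ht => ⟨hUsub ht, trivial⟩).contDiffAt
    (hU.mem_nhds hx)).differentiableAt one_ne_zero

theorem admissible_field_gives_secondary_balance_law_general
    (n m : ℕ)
    (U₀ : Set (Fin (n + 1) → ℝ))
    (F : Fin (n + 1) → Fin m →
      ((Fin (n + 1) → ℝ) × (Fin m → ℝ) × (Fin m → Fin (n + 1) → ℝ)) → ℝ)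
    (Psrc : Fin m →
      ((Fin (n + 1) → ℝ) × (Fin m → ℝ) × (Fin m → Fin (n + 1) → ℝ)) → ℝ)
    (hF : ∀ μ i, ContDiffOn ℝ (⊤ : ℕ∞) (F μ i)
      (U₀ ×ˢ (Set.univ : Set ((Fin m → ℝ) × (Fin m → Fin (n + 1) → ℝ)))))
    (ξ : ((Fin (n + 1) → ℝ) × (Fin m → ℝ)) → Fin m → ℝ)
    (hξ : ContDiffOn ℝ (⊤ : ℕ∞) ξ (U₀ ×ˢ (Set.univ : Set (Fin m → ℝ))))
    -- C-admissibility: FDiv(ξ) = Σ_{μ,i} F^μ_i · d_μ ξ^i = 0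
    (hadm : ∀ x ∈ U₀, ∀ (y : Fin m → ℝ) (z : Fin m → Fin (n + 1) → ℝ),
      ∑ μ, ∑ i, F μ i (x, y, z) *
        (fderiv ℝ (fun Q => ξ Q i) (x, y) (Pi.single μ 1, 0)
          + ∑ j, z j μ * fderiv ℝ (fun Q => ξ Q i) (x, y) (0, Pi.single j 1)) = 0)
    (U : Set (Fin (n + 1) → ℝ)) (hU : IsOpen U) (hUsub : U ⊆ U₀)
    (s : (Fin (n + 1) → ℝ) → Fin m → ℝ) (hs : ContDiffOn ℝ (⊤ : ℕ∞) s U)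
    -- s solves the balance system
    (hsol : ∀ i, ∀ x ∈ U,
      ∑ μ, fderiv ℝ (fun t => F μ i (t, s t, jet1 n m s t)) x (Pi.single μ 1)
        = Psrc i (x, s x, jet1 n m s x)) :
    -- secondary balance law
    ∀ x ∈ U,
      ∑ μ, fderiv ℝ
          (fun t => ∑ i, ξ (t, s t) i * F μ i (t, s t, jet1 n m s t)) x
          (Pi.single μ 1)
        = ∑ i, ξ (x, s x) i * Psrc i (x, s x, jet1 n m s x) := by
  intro x hx
  have hsx : DifferentiableAt ℝ s x :=
    (hs.contDiffAt (hU.mem_nhds hx)).differentiableAt (by simp)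
  have hξx : ∀ i, DifferentiableAt ℝ (fun Q => ξ Q i) (x, s x) := fun i =>
    ((contDiffOn_pi.1 hξ i).contDiffAt (prod_mem_nhds
      (Filter.mem_of_superset (hU.mem_nhds hx) hUsub) Filter.univ_mem)).differentiableAt (by simp)
  have hFx : ∀ μ i, DifferentiableAt ℝ (fun t => F μ i (t, s t, jet1 n m s t)) x := fun μ i =>
    ((hF μ i).of_le (WithTop.coe_le_coe.2 le_top)).differentiableAt_comp_jet1
      (hs.of_le (WithTop.coe_le_coe.2 le_top)) hU hUsub hx
  have hξt : ∀ i, DifferentiableAt ℝ (fun t => ξ (t, s t) i) x := fun i =>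
    (hξx i).comp (g := fun Q => ξ Q i) x (differentiableAt_id.prodMk hsx)
  have hFDiv : ∑ μ, ∑ i, F μ i (x, s x, jet1 n m s x) *
      totalDeriv (fun Q => ξ Q i) μ x (s x) (jet1 n m s x) = 0 :=
    hadm x (hUsub hx) (s x) (jet1 n m s x)
  calc ∑ μ, fderiv ℝ (fun t => ∑ i, ξ (t, s t) i * F μ i (t, s t, jet1 n m s t)) x
        (Pi.single μ 1)
      = ∑ μ, ∑ i, (F μ i (x, s x, jet1 n m s x) *
            totalDeriv (fun Q => ξ Q i) μ x (s x) (jet1 n m s x)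
          + ξ (x, s x) i *
            fderiv ℝ (fun t => F μ i (t, s t, jet1 n m s t)) x (Pi.single μ 1)) := by
        refine sum_congr rfl fun μ _ => ?_
        rw [fderiv_sum_mul_apply _ hξt (hFx μ)]
        simp only [fderiv_comp_graph_apply_single (hξx _) hsx, jet1_eq_fderiv_apply hsx]
    _ = ∑ μ, ∑ i, F μ i (x, s x, jet1 n m s x) *
            totalDeriv (fun Q => ξ Q i) μ x (s x) (jet1 n m s x)
          + ∑ i, ξ (x, s x) i *
            ∑ μ, fderiv ℝ (fun t => F μ i (t, s t, jet1 n m s t)) x (Pi.single μ 1) := by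
        simp only [sum_add_distrib, mul_sum]
        rw [sum_comm (f := fun μ i => ξ (x, s x) i * _)]
    _ = ∑ i, ξ (x, s x) i * Psrc i (x, s x, jet1 n m s x) := by
        rw [hFDiv, zero_add]
        exact sum_congr rfl fun i _ => by rw [hsol i x hx]

/-- A `C`-admissible vertical vector field
`ξ` (i.e. `FDiv(ξ) = Σ F^μ_i d_μ ξ^i = 0`) generates a secondary balance law:
every solution `s` of the balance system `Σ_μ ∂_{x^μ}(F^μ_i ∘ j¹s) = Π_i ∘ j¹s`
also satisfies `Σ_μ ∂_{x^μ}( Σ_i ξ^i F^μ_i ∘ j¹s ) = Σ_i ξ^i Π_i ∘ j¹s`. -/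
theorem admissible_field_gives_secondary_balance_law
    (n m : ℕ) (hm : 1 ≤ m)
    (U₀ : Set (Fin (n + 1) → ℝ)) (hU₀ : IsOpen U₀)
    (F : Fin (n + 1) → Fin m →
      ((Fin (n + 1) → ℝ) × (Fin m → ℝ) × (Fin m → Fin (n + 1) → ℝ)) → ℝ)
    (Psrc : Fin m →
      ((Fin (n + 1) → ℝ) × (Fin m → ℝ) × (Fin m → Fin (n + 1) → ℝ)) → ℝ)
    (hF : ∀ μ i, ContDiffOn ℝ (⊤ : ℕ∞) (F μ i)
      (U₀ ×ˢ (Set.univ : Set ((Fin m → ℝ) × (Fin m → Fin (n + 1) → ℝ)))))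
    (hPsrc : ∀ i, ContDiffOn ℝ (⊤ : ℕ∞) (Psrc i)
      (U₀ ×ˢ (Set.univ : Set ((Fin m → ℝ) × (Fin m → Fin (n + 1) → ℝ)))))
    (ξ : ((Fin (n + 1) → ℝ) × (Fin m → ℝ)) → Fin m → ℝ)
    (hξ : ContDiffOn ℝ (⊤ : ℕ∞) ξ (U₀ ×ˢ (Set.univ : Set (Fin m → ℝ))))
    -- C-admissibility: FDiv(ξ) = Σ_{μ,i} F^μ_i · d_μ ξ^i = 0
    (hadm : ∀ x ∈ U₀, ∀ (y : Fin m → ℝ) (z : Fin m → Fin (n + 1) → ℝ),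
      ∑ μ, ∑ i, F μ i (x, y, z) *
        (fderiv ℝ (fun Q => ξ Q i) (x, y) (Pi.single μ 1, 0)
          + ∑ j, z j μ * fderiv ℝ (fun Q => ξ Q i) (x, y) (0, Pi.single j 1)) = 0)
    (U : Set (Fin (n + 1) → ℝ)) (hU : IsOpen U) (hUsub : U ⊆ U₀)
    (s : (Fin (n + 1) → ℝ) → Fin m → ℝ) (hs : ContDiffOn ℝ (⊤ : ℕ∞) s U)
    -- s solves the balance system
    (hsol : ∀ i, ∀ x ∈ U,
      ∑ μ, fderiv ℝ (fun t => F μ i (t, s t, jet1 n m s t)) x (Pi.single μ 1)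
        = Psrc i (x, s x, jet1 n m s x)) :
    -- secondary balance law
    ∀ x ∈ U,
      ∑ μ, fderiv ℝ
          (fun t => ∑ i, ξ (t, s t) i * F μ i (t, s t, jet1 n m s t)) x
          (Pi.single μ 1)
        = ∑ i, ξ (x, s x) i * Psrc i (x, s x, jet1 n m s x) :=
  admissible_field_gives_secondary_balance_law_general n m U₀ F Psrc hF ξ hξ hadm U hU hUsub s hs
    hsol
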